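/- For every non-negative integer k, there exists a connected graph G with a vertex v such that γ_g(G−v) − γ_g(G) = k; in particular the difference γ_g(G−v) − γ_g(G) cannot be bounded above. -/

import Mathlib

open Classical

noncomputable section

namespace DomGame

variable {V : Type*} [Fintype V]

/-- Closed neighborhood of `v` as a `Finset`. -/
noncomputable def N (G : SimpleGraph V) (v : V) : Finset V :=
  Finset.univ.filter (fun u => G.Adj v u ∨ u = v)

/-- Legal moves given the set `S` of already dominated vertices. -/
noncomputable def moves (G : SimpleGraph V) (S : Finset V) : Finset V :=
  Finset.univ.filter (fun v => ¬ N G v ⊆ S)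

lemma card_lt {G : SimpleGraph V} {S : Finset V} (v : V) (hv : v ∈ moves G S) :
    (Finset.univ \ (S ∪ N G v)).card < (Finset.univ \ S).card := by
  simp only [moves, Finset.mem_filter] at hv
  obtain ⟨u, hu, hus⟩ := Finset.not_subset.mp hv.2
  apply Finset.card_lt_card
  refine ⟨Finset.sdiff_subset_sdiff (le_refl _) Finset.subset_union_left, ?_⟩
  intro hsub
  have := hsub (Finset.mem_sdiff.mpr ⟨Finset.mem_univ u, hus⟩)
  rw [Finset.mem_sdiff, Finset.mem_union] at this
  exact this.2 (Or.inr hu)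

mutual
/-- Number of moves with optimal play when it is Dominator's turn and
`S` is the set of already dominated vertices. -/
noncomputable def gameD (G : SimpleGraph V) (S : Finset V) : ℕ :=
  if h : (moves G S).Nonempty then
    1 + (moves G S).attach.inf' (by simpa using h)
      (fun v => gameS G (S ∪ N G v.1))
  else 0
termination_by (Finset.univ \ S).card
decreasing_by exact card_lt v.1 v.2

/-- Number of moves with optimal play when it is Staller's turn. -/
noncomputable def gameS (G : SimpleGraph V) (S : Finset V) : ℕ :=
  if h : (moves G S).Nonempty then
    1 + (moves G S).attach.sup' (by simpa using h)
      (fun v => gameD G (S ∪ N G v.1))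
  else 0
termination_by (Finset.univ \ S).card
decreasing_by exact card_lt v.1 v.2
end

/-- The (Dominator-start) game domination number. -/
noncomputable def gammaG (G : SimpleGraph V) : ℕ := gameD G ∅

/-- The Staller-start game domination number. -/
noncomputable def gammaG' (G : SimpleGraph V) : ℕ := gameS G ∅

/-! A universal vertex dominates the whole graph in one move, so a graph with one has game
domination number 1. Deleting the centre of the star with `k + 1` leaves leaves `k + 1` isolated
vertices, and on an edgeless graph every move dominates exactly one new vertex, so that game lasts
`k + 1` moves. -/

variable {G : SimpleGraph V} {S : Finset V}

lemma moves_univ (G : SimpleGraph V) : moves G Finset.univ = ∅ := by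
  ext v
  simp [moves]

lemma gameD_of_moves_eq_empty (h : moves G S = ∅) : gameD G S = 0 := by
  rw [gameD, dif_neg (by simp [h])]

lemma gameS_of_moves_eq_empty (h : moves G S = ∅) : gameS G S = 0 := by
  rw [gameS, dif_neg (by simp [h])]

lemma gameD_le_gameS_add_one {v : V} (hv : v ∈ moves G S) :
    gameD G S ≤ gameS G (S ∪ N G v) + 1 := by
  rw [gameD, dif_pos ⟨v, hv⟩, add_comm]
  exact Nat.add_le_add_right (Finset.inf'_le _ (Finset.mem_attach _ ⟨v, hv⟩)) 1

lemma one_le_gameD (h : (moves G S).Nonempty) : 1 ≤ gameD G S := by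
  rw [gameD, dif_pos h]
  omega

lemma gameD_eq_succ_of_forall {c : ℕ} (h : (moves G S).Nonempty)
    (hc : ∀ v ∈ moves G S, gameS G (S ∪ N G v) = c) : gameD G S = c + 1 := by
  rw [gameD, dif_pos h, Finset.inf'_congr _ rfl (g := fun _ => c) (fun v _ => hc v.1 v.2),
    Finset.inf'_const, add_comm]

lemma gameS_eq_succ_of_forall {c : ℕ} (h : (moves G S).Nonempty)
    (hc : ∀ v ∈ moves G S, gameD G (S ∪ N G v) = c) : gameS G S = c + 1 := by
  rw [gameS, dif_pos h, Finset.sup'_congr _ rfl (g := fun _ => c) (fun v _ => hc v.1 v.2),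
    Finset.sup'_const, add_comm]

lemma N_eq_univ_of_isUniversal {v : V} (hv : G.IsUniversal v) : N G v = Finset.univ := by
  ext u
  by_cases h : v = u
  · simp [N, h]
  · simp [N, hv h]

lemma gammaG_eq_one_of_isUniversal {v : V} (hv : G.IsUniversal v) : gammaG G = 1 := by
  have hmove : v ∈ moves G ∅ := by
    simpa [moves, N_eq_univ_of_isUniversal hv] using Finset.univ_nonempty_iff.mpr ⟨v⟩ |>.ne_empty
  have hlast : gameS G (∅ ∪ N G v) = 0 := by
    rw [N_eq_univ_of_isUniversal hv, Finset.empty_union]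
    exact gameS_of_moves_eq_empty (moves_univ G)
  have := gameD_le_gameS_add_one hmove
  have := one_le_gameD ⟨v, hmove⟩
  rw [gammaG]
  omega

lemma N_bot (v : V) : N ⊥ v = {v} := by
  ext u
  simp [N, eq_comm]

lemma moves_bot (S : Finset V) : moves ⊥ S = Finset.univ \ S := by
  ext v
  simp [moves, N_bot]

lemma gameD_bot_and_gameS_bot (S : Finset V) :
    gameD ⊥ S = (Finset.univ \ S).card ∧ gameS ⊥ S = (Finset.univ \ S).card := by
  induction hn : (Finset.univ \ S).card generalizing S with
  | zero =>
    have hmoves : moves ⊥ S = ∅ := by rwa [moves_bot, ← Finset.card_eq_zero]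
    exact ⟨gameD_of_moves_eq_empty hmoves, gameS_of_moves_eq_empty hmoves⟩
  | succ n ih =>
    have hne : (moves ⊥ S).Nonempty := by
      rw [moves_bot, ← Finset.card_pos, hn]
      exact n.succ_pos
    have hnext : ∀ v ∈ moves ⊥ S, (Finset.univ \ (S ∪ N ⊥ v)).card = n := by
      intro v hv
      rw [moves_bot] at hv
      rw [N_bot, Finset.union_singleton, Finset.sdiff_insert, Finset.card_erase_of_mem hv, hn,
        Nat.add_sub_cancel]
    exact ⟨gameD_eq_succ_of_forall hne fun v hv => (ih _ (hnext v hv)).2,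
      gameS_eq_succ_of_forall hne fun v hv => (ih _ (hnext v hv)).1⟩

lemma gammaG_bot : gammaG (⊥ : SimpleGraph V) = Fintype.card V := by
  simpa [gammaG] using (gameD_bot_and_gameS_bot (∅ : Finset V)).1

end DomGame

lemma SimpleGraph.induce_compl_singleton_starGraph {V : Type*} (r : V) :
    (SimpleGraph.starGraph r).induce {r}ᶜ = ⊥ := by
  ext ⟨a, ha⟩ ⟨b, hb⟩
  simp only [Set.mem_compl_singleton_iff] at ha hb
  simp [ha, hb]

open DomGame in
/-- For every `k`, there is a connected graph `G` and a vertex `v` with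
`γ_g(G−v) − γ_g(G) = k`; in particular the difference is unbounded above. -/
theorem vertex_removal_unbounded (k : ℕ) :
    ∃ (n : ℕ) (G : SimpleGraph (Fin n)) (v : Fin n),
      G.Connected ∧ (gammaG (G.induce {v}ᶜ) : ℤ) - gammaG G = k := by
  refine ⟨k + 2, SimpleGraph.starGraph 0, 0, SimpleGraph.connected_starGraph 0, ?_⟩
  rw [SimpleGraph.induce_compl_singleton_starGraph, gammaG_bot,
    gammaG_eq_one_of_isUniversal SimpleGraph.isUniversal_starGraph_self,
    Fintype.card_compl_set, Set.card_singleton, Fintype.card_fin]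
  push_cast
  ring
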